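/- Let A be a finite alphabet with |A| ≥ 2, f₁ : A → A, f₂ : A × A → A, and let C ⊆ A³ be unambiguous for the Diamond Network. Suppose x, y ∈ C are distinct with ω(x) = {f₂(x₂,x₃)} a singleton and ω(y) = {f₂(y₂,y₃)} a singleton, where ω(z) = {f₂(z₂',z₃') : dH((z₂',z₃'),(z₂,z₃)) ≤ 1}. Then f₂(x₂,x₃) = f₂(y₂,y₃), and Ω(x) ∩ Ω(y) ≠ ∅, a contradiction; hence no two such codewords exist. -/

import Mathlib

open Finset

/-- Hamming distance on triples. -/
def dH3 {A : Type*} [DecidableEq A] (x y : A × A × A) : ℕ :=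
  (if x.1 = y.1 then 0 else 1) + (if x.2.1 = y.2.1 then 0 else 1) +
    (if x.2.2 = y.2.2 then 0 else 1)

/-- The set of possible outputs at the terminal of the Diamond Network. -/
def Omega {A : Type*} [Fintype A] [DecidableEq A] (f₁ : A → A) (f₂ : A → A → A)
    (x : A × A × A) : Finset (A × A) :=
  (Finset.univ.filter fun x' : A × A × A => dH3 x' x ≤ 1).image
    fun x' => (f₁ x'.1, f₂ x'.2.1 x'.2.2)

/-- An outer code is unambiguous if output sets of distinct codewords are disjoint. -/
def Unambiguous {A : Type*} [Fintype A] [DecidableEq A] (f₁ : A → A) (f₂ : A → A → A)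
    (C : Finset (A × A × A)) : Prop :=
  ∀ x ∈ C, ∀ y ∈ C, x ≠ y → Disjoint (Omega f₁ f₂ x) (Omega f₁ f₂ y)

/-- Hamming distance on pairs. -/
def dH2 {A : Type*} [DecidableEq A] (p q : A × A) : ℕ :=
  (if p.1 = q.1 then 0 else 1) + (if p.2 = q.2 then 0 else 1)

/-- Possible symbols exiting the lower vertex V₂. -/
def omegaLow {A : Type*} [Fintype A] [DecidableEq A] (f₂ : A → A → A) (x : A × A × A) :
    Finset A :=
  (Finset.univ.filter fun p : A × A => dH2 p (x.2.1, x.2.2) ≤ 1).image fun p => f₂ p.1 p.2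

section DiamondNetwork

variable {A : Type*} [DecidableEq A]

lemma dH2_mk_left_le_one (a b b' : A) : dH2 (a, b') (a, b) ≤ 1 := by
  simp only [dH2]; split_ifs <;> omega

lemma dH2_mk_right_le_one (a a' b : A) : dH2 (a', b) (a, b) ≤ 1 := by
  simp only [dH2]; split_ifs <;> omega

lemma dH3_mk_fst_le_one (a a' : A) (p : A × A) : dH3 (a', p) (a, p) ≤ 1 := by
  simp only [dH3]; split_ifs <;> omega

variable [Fintype A]

lemma mem_omegaLow_of_dH2_le_one (f₂ : A → A → A) {x : A × A × A} {p : A × A}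
    (h : dH2 p (x.2.1, x.2.2) ≤ 1) : f₂ p.1 p.2 ∈ omegaLow f₂ x :=
  mem_image.2 ⟨p, mem_filter.2 ⟨mem_univ p, h⟩, rfl⟩

lemma mem_Omega_of_dH3_le_one (f₁ : A → A) (f₂ : A → A → A) {x x' : A × A × A}
    (h : dH3 x' x ≤ 1) : (f₁ x'.1, f₂ x'.2.1 x'.2.2) ∈ Omega f₁ f₂ x :=
  mem_image.2 ⟨x', mem_filter.2 ⟨mem_univ x', h⟩, rfl⟩

/-- The mixed pair `(x₂, y₃)` is adjacent to both `(x₂, x₃)` and `(y₂, y₃)`, so it is seen by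
both singleton sets. -/
lemma eq_of_omegaLow_eq_singleton (f₂ : A → A → A) {x y : A × A × A}
    (hox : omegaLow f₂ x = {f₂ x.2.1 x.2.2}) (hoy : omegaLow f₂ y = {f₂ y.2.1 y.2.2}) :
    f₂ x.2.1 x.2.2 = f₂ y.2.1 y.2.2 := by
  have hmx : f₂ x.2.1 y.2.2 ∈ omegaLow f₂ x :=
    mem_omegaLow_of_dH2_le_one f₂ (dH2_mk_left_le_one x.2.1 x.2.2 y.2.2)
  have hmy : f₂ x.2.1 y.2.2 ∈ omegaLow f₂ y :=
    mem_omegaLow_of_dH2_le_one f₂ (dH2_mk_right_le_one y.2.1 x.2.1 y.2.2)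
  rw [hox, mem_singleton] at hmx
  rw [hoy, mem_singleton] at hmy
  exact hmx.symm.trans hmy

/-- Corrupting the first symbol of `x` into `y₁` yields the output that `y` produces uncorrupted. -/
lemma mem_Omega_inter_of_f₂_eq (f₁ : A → A) (f₂ : A → A → A) {x y : A × A × A}
    (h : f₂ x.2.1 x.2.2 = f₂ y.2.1 y.2.2) :
    (f₁ y.1, f₂ y.2.1 y.2.2) ∈ Omega f₁ f₂ x ∩ Omega f₁ f₂ y := by
  refine mem_inter.2 ⟨?_, mem_Omega_of_dH3_le_one f₁ f₂ (dH3_mk_fst_le_one y.1 y.1 y.2)⟩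
  rw [← h]
  exact mem_Omega_of_dH3_le_one f₁ f₂ (dH3_mk_fst_le_one x.1 y.1 x.2)

end DiamondNetwork

theorem stmt18_general {A : Type*} [Fintype A] [DecidableEq A]
    (f₁ : A → A) (f₂ : A → A → A) (C : Finset (A × A × A))
    (hC : Unambiguous f₁ f₂ C) (x y : A × A × A) (hx : x ∈ C) (hy : y ∈ C) (hxy : x ≠ y)
    (hox : omegaLow f₂ x = {f₂ x.2.1 x.2.2}) (hoy : omegaLow f₂ y = {f₂ y.2.1 y.2.2}) :
    f₂ x.2.1 x.2.2 = f₂ y.2.1 y.2.2 ∧ (Omega f₁ f₂ x ∩ Omega f₁ f₂ y).Nonempty ∧ False := by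
  have hf₂ := eq_of_omegaLow_eq_singleton f₂ hox hoy
  have hmem := mem_Omega_inter_of_f₂_eq f₁ f₂ hf₂
  have hdisj := hC x hx y hy hxy
  exact ⟨hf₂, ⟨_, hmem⟩, disjoint_left.1 hdisj (mem_inter.1 hmem).1 (mem_inter.1 hmem).2⟩

theorem stmt18 {A : Type*} [Fintype A] [DecidableEq A] (hA : 2 ≤ Fintype.card A)
    (f₁ : A → A) (f₂ : A → A → A) (C : Finset (A × A × A))
    (hC : Unambiguous f₁ f₂ C) (x y : A × A × A) (hx : x ∈ C) (hy : y ∈ C) (hxy : x ≠ y)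
    (hox : omegaLow f₂ x = {f₂ x.2.1 x.2.2}) (hoy : omegaLow f₂ y = {f₂ y.2.1 y.2.2}) :
    f₂ x.2.1 x.2.2 = f₂ y.2.1 y.2.2 ∧ (Omega f₁ f₂ x ∩ Omega f₁ f₂ y).Nonempty ∧ False :=
  stmt18_general f₁ f₂ C hC x y hx hy hxy hox hoy
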